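/- arXiv:1712.10289 — 3 statements merged into one kernel-verified Lean document; each statement's English description precedes it below -/
import Mathlib

section
/- For f ∈ C^n(ℝ), n ≥ 1, the n-th order divided difference satisfies the integral representation f^[n](x₀,…,xₙ) = ∫₀¹ ∂_i f^[n-1](x₀,…,x_{i-2}, t·x_{i-1} + (1-t)·x_i, x_{i+1},…,xₙ) dt for each 1 ≤ i ≤ n. -/
open MeasureTheory

/-- The `n`-th order divided difference of `f`, defined recursively:
`dd f 0 x = f x₀`, and
`dd f (n+1) (x₀,x₁,…) = (dd f n (x₀,x₂,…) - dd f n (x₁,x₂,…))/(x₀ - x₁)` if `x₀ ≠ x₁`,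
and `∂₁ (dd f n) (x₁,x₂,…)` if `x₀ = x₁`. -/
noncomputable def dd (f : ℝ → ℂ) : ℕ → (ℕ → ℝ) → ℂ
  | 0, x => f (x 0)
  | n + 1, x =>
    if x 0 = x 1 then
      deriv (fun s => dd f n (fun i => if i = 0 then s else x (i + 1))) (x 1)
    else
      (dd f n (fun i => if i = 0 then x 0 else x (i + 1)) -
        dd f n (fun i => x (i + 1))) / (((x 0 : ℂ)) - ((x 1 : ℂ)))

/-!
Unfolding the recursion once, `f^[n+1](x) = dslope (u ↦ f^[n](u, x₂, x₃, …)) x₁ x₀`.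
For `f ∈ Cⁿ` the divided difference is invariant under adjacent transpositions of its arguments:
swapping `x₀, x₁` is the symmetry of `dslope`, swapping `x₁, x₂` is the symmetry of the second
divided difference of a differentiable function, and every later swap happens inside the inner
`f^[n]`. Moving `x_{i-1}, x_i` to the front thus writes `f^[n](x)` as `dslope g x_i x_{i-1}`, where
`g s = f^[n-1](x₀, …, x_{i-2}, s, x_{i+1}, …)`, and for `g ∈ C¹` the fundamental theorem of
calculus gives `dslope g b a = ∫₀¹ g'(b + t (a - b)) dt`. The same integral formula, differentiated
under the integral sign, shows that `dslope` maps `C^{k+1}` to `C^k`, which is where the regularity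
of `g` comes from.
-/

open Function Filter Topology

section Slope

variable {E : Type*} [NormedAddCommGroup E] [NormedSpace ℝ E]

theorem dslope_comm (g : ℝ → E) (a b : ℝ) : dslope g a b = dslope g b a := by
  rcases eq_or_ne a b with rfl | h
  · rfl
  · rw [dslope_of_ne _ h.symm, dslope_of_ne _ h, slope_comm]

theorem dslope_dslope_comm_of_ne {H : ℝ → E} {a b c : ℝ} (hab : a ≠ b) (hac : a ≠ c)
    (hbc : b ≠ c) : dslope (dslope H c) b a = dslope (dslope H b) c a := by
  simp only [dslope_of_ne _ hab, dslope_of_ne _ hac, dslope_of_ne _ hbc,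
    dslope_of_ne _ hbc.symm, slope_def_module]
  have h1 : a - b ≠ 0 := sub_ne_zero.2 hab
  have h2 : a - c ≠ 0 := sub_ne_zero.2 hac
  have h3 : b - c ≠ 0 := sub_ne_zero.2 hbc
  match_scalars <;> field_simp <;> ring

theorem dslope_dslope_comm_same {H : ℝ → E} {b c : ℝ} (hb : DifferentiableAt ℝ H b)
    (hbc : b ≠ c) : dslope (dslope H c) b b = dslope (dslope H b) c b := by
  have hl : ContinuousAt (dslope (dslope H c) b) b :=
    continuousAt_dslope_same.2 ((differentiableAt_dslope_of_ne hbc).2 hb)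
  have hr : ContinuousAt (dslope (dslope H b) c) b :=
    (continuousAt_dslope_of_ne hbc).2 (continuousAt_dslope_same.2 hb)
  have heq : dslope (dslope H c) b =ᶠ[𝓝[≠] b] dslope (dslope H b) c := by
    filter_upwards [self_mem_nhdsWithin, nhdsWithin_le_nhds (isOpen_ne.mem_nhds hbc)]
      with a hab hac
    exact dslope_dslope_comm_of_ne hab hac hbc
  exact tendsto_nhds_unique (hl.tendsto.mono_left nhdsWithin_le_nhds |>.congr' heq)
    (hr.tendsto.mono_left nhdsWithin_le_nhds)

theorem dslope_dslope_comm {H : ℝ → E} {b c : ℝ} (hb : DifferentiableAt ℝ H b)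
    (hc : DifferentiableAt ℝ H c) (a : ℝ) :
    dslope (dslope H c) b a = dslope (dslope H b) c a := by
  rcases eq_or_ne b c with rfl | hbc
  · rfl
  rcases eq_or_ne a b with rfl | hab
  · exact dslope_dslope_comm_same hb hbc
  rcases eq_or_ne a c with rfl | hac
  · exact (dslope_dslope_comm_same hc hbc.symm).symm
  exact dslope_dslope_comm_of_ne hab hac hbc

theorem hasDerivAt_integral_smul_comp_affine {φ : ℝ → ℝ} (hφ : Continuous φ) {u : ℝ → E}
    (hu : ContDiff ℝ 1 u) (a b₀ : ℝ) :
    HasDerivAt (fun b => ∫ t in (0 : ℝ)..1, φ t • u (a + t * (b - a)))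
      (∫ t in (0 : ℝ)..1, (t * φ t) • deriv u (a + t * (b₀ - a))) b₀ := by
  obtain ⟨hud, hu'c⟩ := contDiff_one_iff_deriv.1 hu
  have hF' : Continuous fun p : ℝ × ℝ => (p.2 * φ p.2) • deriv u (a + p.2 * (p.1 - a)) := by
    fun_prop
  obtain ⟨C, hC⟩ := ((isCompact_closedBall b₀ 1).prod isCompact_Icc).exists_bound_of_continuousOn
    hF'.continuousOn
  refine (intervalIntegral.hasDerivAt_integral_of_dominated_loc_of_deriv_le
    (F := fun b t => φ t • u (a + t * (b - a)))
    (F' := fun b t => (t * φ t) • deriv u (a + t * (b - a)))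
    (bound := fun _ => C) (Metric.ball_mem_nhds b₀ one_pos)
    (.of_forall fun b => (by fun_prop : Continuous _).aestronglyMeasurable)
    ((by fun_prop : Continuous _).intervalIntegrable _ _)
    (by fun_prop : Continuous _).aestronglyMeasurable ?_ intervalIntegrable_const ?_).2
  · refine .of_forall fun t ht b hb => hC (b, t) ⟨Metric.ball_subset_closedBall hb, ?_⟩
    rw [Set.uIoc_of_le zero_le_one] at ht
    exact Set.Ioc_subset_Icc_self ht
  · refine .of_forall fun t _ b _ => ?_
    have hg : HasDerivAt (fun b => a + t * (b - a)) t b := by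
      simpa using ((hasDerivAt_id b).sub_const a).const_mul t |>.const_add a
    have := ((hud _).hasDerivAt.scomp b hg).const_smul (φ t)
    rwa [smul_smul, mul_comm] at this

theorem contDiff_integral_smul_comp_affine (k : ℕ) {φ : ℝ → ℝ} (hφ : Continuous φ) {u : ℝ → E}
    (hu : ContDiff ℝ k u) (a : ℝ) :
    ContDiff ℝ k (fun b => ∫ t in (0 : ℝ)..1, φ t • u (a + t * (b - a))) := by
  induction k generalizing φ u with
  | zero =>
    rw [Nat.cast_zero, contDiff_zero] at hu ⊢
    exact intervalIntegral.continuous_parametric_intervalIntegral_of_continuous' (by fun_prop) 0 1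
  | succ k ih =>
    have hu1 : ContDiff ℝ 1 u := hu.of_le (by simp)
    rw [Nat.cast_succ, contDiff_succ_iff_deriv] at hu ⊢
    have hderiv := hasDerivAt_integral_smul_comp_affine hφ hu1 a
    refine ⟨fun b => (hderiv b).differentiableAt, by simp, ?_⟩
    rw [funext fun b => (hderiv b).deriv]
    exact ih (by fun_prop) hu.2.2

variable [CompleteSpace E]

theorem dslope_eq_integral {K : ℝ → E} (hK : ContDiff ℝ 1 K) (a b : ℝ) :
    dslope K a b = ∫ t in (0 : ℝ)..1, deriv K (a + t * (b - a)) := by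
  rcases eq_or_ne b a with rfl | hba
  · simp [dslope_same]
  obtain ⟨hKd, hK'c⟩ := contDiff_one_iff_deriv.1 hK
  simp_rw [mul_comm _ (b - a)]
  rw [intervalIntegral.integral_comp_add_mul _ (sub_ne_zero.2 hba), dslope_of_ne _ hba,
    slope_def_module, mul_zero, mul_one, add_zero, add_sub_cancel,
    intervalIntegral.integral_deriv_eq_sub (fun x _ => hKd x) (hK'c.intervalIntegrable _ _)]

theorem contDiff_dslope {K : ℝ → E} {k : ℕ} (hK : ContDiff ℝ (k + 1) K) (a : ℝ) :
    ContDiff ℝ k (dslope K a) := by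
  have hK1 : ContDiff ℝ 1 K := hK.of_le (by simp)
  have := contDiff_integral_smul_comp_affine k continuous_const
    (contDiff_succ_iff_deriv.1 hK).2.2 (φ := fun _ => (1 : ℝ)) a
  simpa only [one_smul, ← dslope_eq_integral hK1] using this

end Slope

theorem update_zero_congr {α : Type*} {y z : ℕ → α} (h : ∀ i, y (i + 1) = z (i + 1)) (u : α) :
    update y 0 u = update z 0 u := by
  funext i
  rcases i with _ | i <;> simp [h]

theorem dd_succ (f : ℝ → ℂ) (n : ℕ) (x : ℕ → ℝ) :
    dd f (n + 1) x = dslope (fun u => dd f n (update (fun i => x (i + 1)) 0 u)) (x 1) (x 0) := by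
  have hupd (u : ℝ) : update (fun i => x (i + 1)) 0 u = fun i => if i = 0 then u else x (i + 1) :=
    funext fun i => update_apply _ _ _ _
  have hx1 : (fun i => if i = 0 then x 1 else x (i + 1)) = fun i => x (i + 1) := by
    funext i
    rcases i with _ | i <;> rfl
  simp only [hupd]
  by_cases h : x 0 = x 1
  · rw [dd, if_pos h, h, dslope_same]
  · rw [dd, if_neg h, dslope_of_ne _ h, slope_def_module, hx1, Complex.real_smul, div_eq_inv_mul]
    push_cast
    rfl

theorem dd_add_two (f : ℝ → ℂ) (n : ℕ) (x : ℕ → ℝ) :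
    dd f (n + 2) x =
      dslope (dslope (fun v => dd f n (update (fun i => x (i + 2)) 0 v)) (x 2)) (x 1) (x 0) := by
  simp [dd_succ]

theorem contDiff_dd_update_zero {f : ℝ → ℂ} {n k : ℕ} (hf : ContDiff ℝ (n + k : ℕ) f)
    (y : ℕ → ℝ) : ContDiff ℝ k (fun s => dd f n (update y 0 s)) := by
  induction n generalizing k y with
  | zero => simpa [dd] using hf
  | succ n ih =>
    simp only [dd_succ, update_self, ne_eq, Nat.add_one_ne_zero, not_false_eq_true, update_of_ne]
    have hH := ih (k := k + 1) (by rwa [← Nat.add_assoc, Nat.add_right_comm]) (fun i => y (i + 1))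
    exact contDiff_dslope (by exact_mod_cast hH) _

theorem dd_comp_swap {f : ℝ → ℂ} :
    ∀ {n k : ℕ}, ContDiff ℝ n f → k < n → ∀ x : ℕ → ℝ,
      dd f n (x ∘ Equiv.swap k (k + 1)) = dd f n x
  | n + 1, 0, _, _, x => by
    have htail (u : ℝ) : update (fun i => (x ∘ Equiv.swap 0 1) (i + 1)) 0 u =
        update (fun i => x (i + 1)) 0 u :=
      update_zero_congr (fun i => by simp [Equiv.swap_apply_of_ne_of_ne]) u
    rw [dd_succ, dd_succ]
    simp only [htail]
    simp only [comp_apply, zero_add, Equiv.swap_apply_left, Equiv.swap_apply_right,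
      dslope_comm _ (x 0)]
  | n + 2, 1, hf, _, x => by
    have hH : Differentiable ℝ (fun v => dd f n (update (fun i => x (i + 2)) 0 v)) :=
      (contDiff_dd_update_zero (k := 2) hf _).differentiable (by simp)
    have htail (u : ℝ) : update (fun i => (x ∘ Equiv.swap 1 2) (i + 2)) 0 u =
        update (fun i => x (i + 2)) 0 u :=
      update_zero_congr (fun i => by simp [Equiv.swap_apply_of_ne_of_ne]) u
    rw [dd_add_two, dd_add_two]
    simp only [htail]
    simp only [comp_apply, Nat.reduceAdd, Equiv.swap_apply_left, Equiv.swap_apply_right,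
      Equiv.swap_apply_of_ne_of_ne zero_ne_one (OfNat.zero_ne_ofNat 2)]
    exact dslope_dslope_comm (hH _) (hH _) _
  | n + 1, k + 2, hf, hk, x => by
    have htail (u : ℝ) : update (fun i => (x ∘ Equiv.swap (k + 2) (k + 2 + 1)) (i + 1)) 0 u =
        update (fun i => x (i + 1)) 0 u ∘ Equiv.swap (k + 1) (k + 1 + 1) := by
      rw [update_comp_equiv, Equiv.symm_swap, Equiv.swap_apply_of_ne_of_ne (by omega) (by omega)]
      congr 1
      funext i
      exact congrArg x (Nat.succ_injective.swap_apply (k + 1) (k + 1 + 1) i)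
    rw [dd_succ, dd_succ]
    simp only [htail, dd_comp_swap (hf.of_le (by norm_cast; omega)) (by omega : k + 1 < n)]
    simp [Equiv.swap_apply_of_ne_of_ne]

theorem contDiff_dd_update {f : ℝ → ℂ} {n k p : ℕ} (hf : ContDiff ℝ (n + k : ℕ) f) (hp : p ≤ n)
    (y : ℕ → ℝ) : ContDiff ℝ k (fun s => dd f n (update y p s)) := by
  induction p generalizing y with
  | zero => exact contDiff_dd_update_zero hf y
  | succ p ih =>
    have hswap (s : ℝ) : update y (p + 1) s =
        update (y ∘ Equiv.swap p (p + 1)) p s ∘ Equiv.swap p (p + 1) := by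
      rw [update_comp_equiv, Equiv.symm_swap, Equiv.swap_apply_left]
      congr 1
      funext j
      simp [Equiv.swap_apply_self]
    simp only [hswap, dd_comp_swap (hf.of_le (by norm_cast; omega)) (by omega : p < n)]
    exact ih (by omega) _

/-- `x` with its two entries `x (i - 1)`, `x i` replaced by the single entry `s`. -/
def mergeAdj (x : ℕ → ℝ) (i : ℕ) (s : ℝ) : ℕ → ℝ :=
  fun j => if j + 1 < i then x j else if j + 1 = i then s else x (j + 1)

theorem update_mergeAdj (x : ℕ → ℝ) (m : ℕ) (s t : ℝ) :
    update (mergeAdj x (m + 1) t) m s = mergeAdj x (m + 1) s := by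
  funext j
  simp only [update_apply, mergeAdj]
  split_ifs <;> first | rfl | omega

theorem dd_succ_eq_dslope_mergeAdj {f : ℝ → ℂ} {n m : ℕ} (hf : ContDiff ℝ (n + 1 : ℕ) f)
    (hm : m ≤ n) (x : ℕ → ℝ) :
    dd f (n + 1) x = dslope (fun s => dd f n (mergeAdj x (m + 1) s)) (x (m + 1)) (x m) := by
  induction m generalizing x with
  | zero =>
    rw [dd_succ]
    congr 2
    funext s
    congr 1
    funext j
    simp only [update_apply, mergeAdj]
    split_ifs <;> first | rfl | omega
  | succ m ih =>
    -- `x'` carries `x (m + 1), x (m + 2), x m` in positions `m, m + 1, m + 2`, so merging its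
    -- positions `m, m + 1` agrees with merging those of `x` at `m + 1, m + 2` up to one swap.
    set x' := (x ∘ Equiv.swap m (m + 1)) ∘ Equiv.swap (m + 1) (m + 1 + 1) with hx'
    have hmerge (s : ℝ) : mergeAdj x' (m + 1) s ∘ Equiv.swap m (m + 1) = mergeAdj x (m + 2) s := by
      funext j
      simp only [hx', mergeAdj, comp_apply, Equiv.swap_apply_def]
      split_ifs <;> first | rfl | (congr 1; omega)
    have hfn : ContDiff ℝ n f := hf.of_le (by norm_cast; omega)
    have hne : m ≠ m + 1 + 1 := by omega
    rw [← dd_comp_swap hf (by omega : m < n + 1), ← dd_comp_swap hf (by omega : m + 1 < n + 1),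
      ih (by omega)]
    simp only [← hmerge, dd_comp_swap hfn (by omega : m < n)]
    simp [x', Equiv.swap_apply_def, hne, hne.symm]

theorem dividedDifference_integral_rep_general (f : ℝ → ℂ) (n : ℕ)
    (hf : ContDiff ℝ n f) (i : ℕ) (hi1 : 1 ≤ i) (hin : i ≤ n) (x : ℕ → ℝ) :
    dd f n x =
      ∫ t in (0:ℝ)..1,
        deriv (fun s => dd f (n - 1)
            (fun j => if j + 1 < i then x j else if j + 1 = i then s else x (j + 1)))
          (t * x (i - 1) + (1 - t) * x i) := by
  obtain ⟨m, rfl⟩ : ∃ m, n = m + 1 := ⟨n - 1, by omega⟩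
  obtain ⟨p, rfl⟩ : ∃ p, i = p + 1 := ⟨i - 1, by omega⟩
  have hg : ContDiff ℝ 1 (fun s => dd f m (mergeAdj x (p + 1) s)) := by
    simpa only [update_mergeAdj, Nat.cast_one] using
      contDiff_dd_update (k := 1) hf (by omega : p ≤ m) (mergeAdj x (p + 1) 0)
  change dd f (m + 1) x = ∫ t in (0:ℝ)..1,
    deriv (fun s => dd f m (mergeAdj x (p + 1) s)) (t * x p + (1 - t) * x (p + 1))
  rw [dd_succ_eq_dslope_mergeAdj (m := p) hf (by omega), dslope_eq_integral hg]
  congr 1 with t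
  congr 1
  ring

/-- For `f ∈ Cⁿ(ℝ)`, `n ≥ 1`, and `1 ≤ i ≤ n`, the integral representation
`f^[n](x₀,…,xₙ) = ∫₀¹ ∂ᵢ f^[n-1](x₀,…,x_{i-2}, t·x_{i-1} + (1-t)·x_i, x_{i+1},…,xₙ) dt`. -/
theorem dividedDifference_integral_rep (f : ℝ → ℂ) (n : ℕ) (hn : 1 ≤ n)
    (hf : ContDiff ℝ n f) (i : ℕ) (hi1 : 1 ≤ i) (hin : i ≤ n) (x : ℕ → ℝ) :
    dd f n x =
      ∫ t in (0:ℝ)..1,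
        deriv (fun s => dd f (n - 1)
            (fun j => if j + 1 < i then x j else if j + 1 = i then s else x (j + 1)))
          (t * x (i - 1) + (1 - t) * x i) :=
  dividedDifference_integral_rep_general f n hf i hi1 hin x
end

section
/- Let f ∈ B²_{∞1}(ℝ) admit the representation f^[2](s,t,u) = ∫_Ω α(s,w)β(t,w)γ(u,w) dσ(w) with α, β, γ bounded measurable on ℝ×Ω, continuous in the first variable, and ∫_Ω ‖α(·,w)‖_∞‖β(·,w)‖_∞‖γ(·,w)‖_∞ dσ(w) < ∞, where L²(Ω,σ) is separable. Then there exist bounded continuous functions a : ℝ → L²(Ω,σ) and b : ℝ² → L²(Ω,σ) with f^[2](s,t,u) = ⟨a(s), b(t,u)⟩ for all (s,t,u) ∈ ℝ³. -/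
/-!
Let `A, B, C` be the sup norms of `α, β, γ` in the first variable and `δ = √(BC/A)`. Then
`a(s) = conj α(s,·) δ` and `b(t,u) = β(t,·) γ(u,·) δ⁻¹` are both dominated by `√(ABC)`, which is
in `L²` because `ABC` is integrable, so dominated convergence turns their pointwise continuity into
continuity in `L²`; and `conj a(s) · b(t,u) = α(s,·) β(t,·) γ(u,·)` pointwise (where `δ = 0` one
of `A, B, C` vanishes, and `0⁻¹ = 0` keeps `b` defined). The conjugate sits on `a` because Mathlib's
inner product is conjugate-linear in the first slot. The sup norms are measurable because a
continuous function has the same supremum on a countable dense set.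
-/

open MeasureTheory

open Filter Topology ENNReal ComplexConjugate

lemma Real.mul_sqrt_div_self {A : ℝ} (hA : 0 ≤ A) (B : ℝ) : A * √(B / A) = √(A * B) := by
  rw [Real.sqrt_div' B hA, Real.sqrt_mul hA]
  rcases (Real.sqrt_nonneg A).eq_or_lt with h | h
  · simp [Real.sqrt_eq_zero hA |>.mp h.symm]
  · nth_rewrite 1 [← Real.mul_self_sqrt hA]
    field_simp

lemma Real.mul_sqrt_div_le_sqrt_mul {a A : ℝ} (h0 : 0 ≤ a) (ha : a ≤ A) (B : ℝ) :
    a * √(B / A) ≤ √(A * B) :=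
  (mul_le_mul_of_nonneg_right ha (Real.sqrt_nonneg _)).trans_eq
    (Real.mul_sqrt_div_self (h0.trans ha) B)

lemma Real.mul_inv_sqrt_div_le_sqrt_mul {b B : ℝ} (h0 : 0 ≤ b) (hb : b ≤ B) (A : ℝ) :
    b * (√(B / A))⁻¹ ≤ √(A * B) := by
  rw [← Real.sqrt_inv, inv_div, mul_comm A]
  exact Real.mul_sqrt_div_le_sqrt_mul h0 hb A

section

variable {Ω : Type*} [MeasurableSpace Ω] {σ : Measure Ω}

theorem measurable_ciSup_of_continuous {X : Type*} [TopologicalSpace X]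
    [TopologicalSpace.SeparableSpace X] {g : X → Ω → ℝ} (hgm : ∀ x, Measurable (g x))
    (hgc : ∀ w, Continuous fun x => g x w) : Measurable fun w => ⨆ x, g x w := by
  obtain ⟨S, hS_count, hS_dense⟩ := TopologicalSpace.exists_countable_dense X
  have := hS_count.to_subtype
  simp_rw [← hS_dense.ciSup' (hgc _)]
  exact Measurable.iSup fun s => hgm s

theorem tendsto_eLpNorm_of_dominated {E : Type*} [NormedAddCommGroup E] {p : ℝ≥0∞}
    (hp : p ≠ ∞) {ι : Type*} {l : Filter ι} [l.IsCountablyGenerated] {F : ι → Ω → E}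
    (hFm : ∀ᶠ i in l, AEStronglyMeasurable (F i) σ) {D : Ω → ℝ} (hD : MemLp D p σ)
    (hFD : ∀ᶠ i in l, ∀ᵐ w ∂σ, ‖F i w‖ ≤ D w)
    (hF_lim : ∀ᵐ w ∂σ, Tendsto (fun i => F i w) l (𝓝 0)) :
    Tendsto (fun i => eLpNorm (F i) p σ) l (𝓝 0) := by
  rcases eq_or_ne p 0 with rfl | hp0
  · simpa using tendsto_const_nhds
  have hp_pos : 0 < p.toReal := ENNReal.toReal_pos hp0 hp
  simp_rw [eLpNorm_eq_lintegral_rpow_enorm_toReal hp0 hp]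
  have h_int : Tendsto (fun i => ∫⁻ w, ‖F i w‖ₑ ^ p.toReal ∂σ) l (𝓝 0) := by
    simpa using tendsto_lintegral_filter_of_dominated_convergence' (f := fun _ => 0)
        (fun w => ‖D w‖ₑ ^ p.toReal) (hFm.mono fun i h => h.enorm.pow_const _)
        (hFD.mono fun i h => h.mono fun w hw => ENNReal.rpow_le_rpow
          (enorm_le_iff_norm_le.2 (hw.trans (Real.le_norm_self _))) hp_pos.le)
        (lintegral_rpow_enorm_lt_top_of_eLpNorm_lt_top hp0 hp hD.2).ne
        (hF_lim.mono fun w hw => by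
          simpa [ENNReal.zero_rpow_of_pos hp_pos] using hw.enorm.ennrpow_const p.toReal)
  simpa [ENNReal.zero_rpow_of_pos (inv_pos.2 hp_pos)] using h_int.ennrpow_const p.toReal⁻¹

theorem exists_continuous_bounded_toLp_of_dominated {X : Type*} [TopologicalSpace X]
    [FirstCountableTopology X] {E : Type*} [NormedAddCommGroup E] {p : ℝ≥0∞} [Fact (1 ≤ p)]
    (hp : p ≠ ∞) {F : X → Ω → E} (hFm : ∀ x, AEStronglyMeasurable (F x) σ) {D : Ω → ℝ}
    (hD : MemLp D p σ) (hFD : ∀ x, ∀ᵐ w ∂σ, ‖F x w‖ ≤ D w)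
    (hFc : ∀ᵐ w ∂σ, Continuous fun x => F x w) :
    ∃ g : X → Lp E p σ, Continuous g ∧ (∃ C, ∀ x, ‖g x‖ ≤ C) ∧ ∀ x, g x =ᵐ[σ] F x := by
  have hF : ∀ x, MemLp (F x) p σ := fun x =>
    hD.of_le (hFm x) ((hFD x).mono fun w hw => hw.trans (Real.le_norm_self _))
  refine ⟨fun x => (hF x).toLp, continuous_iff_continuousAt.2 fun x₀ => ?_,
    ⟨(eLpNorm D p σ).toReal, fun x => ?_⟩, fun x => (hF x).coeFn_toLp⟩
  · refine (Lp.tendsto_Lp_iff_tendsto_eLpNorm'' _ hF _ (hF x₀)).2 ?_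
    refine tendsto_eLpNorm_of_dominated hp (.of_forall fun x => (hFm x).sub (hFm x₀))
      (hD.add hD) (.of_forall fun x => ?_) ?_
    · filter_upwards [hFD x, hFD x₀] with w h h₀
      exact (norm_sub_le _ _).trans (add_le_add h h₀)
    · filter_upwards [hFc] with w hw
      simpa using (hw.tendsto x₀).sub_const (F x₀ w)
  · rw [Lp.norm_toLp]
    exact ENNReal.toReal_mono hD.eLpNorm_ne_top (eLpNorm_mono_ae_real (hFD x))

theorem MeasureTheory.Integrable.memLp_two_sqrt {f : Ω → ℝ} (hf : Integrable f σ) :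
    MemLp (fun w => √(f w)) 2 σ :=
  (memLp_two_iff_integrable_sq (Real.continuous_sqrt.comp_aestronglyMeasurable hf.1)).2
    (by simpa [Real.sq_sqrt'] using hf.pos_part)

theorem inner_conj_mul_sqrt_div_mul_inv {𝕜 : Type*} [RCLike 𝕜] {a g : 𝕜} {A B : ℝ}
    (ha : ‖a‖ ≤ A) (hg : ‖g‖ ≤ B) :
    inner 𝕜 (conj a * (√(B / A) : 𝕜)) (g * ((√(B / A))⁻¹ : ℝ)) = a * g := by
  rcases eq_or_ne (√(B / A)) 0 with h | h
  · have hag : a * g = 0 := by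
      rw [Real.sqrt_eq_zero', div_nonpos_iff] at h
      rcases h with ⟨-, hA⟩ | ⟨hB, -⟩
      · simp [norm_le_zero_iff.1 (ha.trans hA)]
      · simp [norm_le_zero_iff.1 (hg.trans hB)]
    simp [h, hag]
  · simp only [RCLike.inner_apply, map_mul, RCLike.conj_conj, RCLike.conj_ofReal]
    push_cast
    have : ((√(B / A) : ℝ) : 𝕜) ≠ 0 := RCLike.ofReal_ne_zero.2 h
    field_simp

theorem exists_L2_factorization_of_dominated {𝕜 : Type*} [RCLike 𝕜]
    {X Y : Type*} [TopologicalSpace X] [FirstCountableTopology X]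
    [TopologicalSpace Y] [FirstCountableTopology Y] {α : X → Ω → 𝕜} {G : Y → Ω → 𝕜}
    {A B : Ω → ℝ} (hαm : ∀ x, Measurable (α x)) (hGm : ∀ y, Measurable (G y))
    (hAm : Measurable A) (hBm : Measurable B)
    (hαA : ∀ x w, ‖α x w‖ ≤ A w) (hGB : ∀ y w, ‖G y w‖ ≤ B w)
    (hαc : ∀ w, Continuous fun x => α x w) (hGc : ∀ w, Continuous fun y => G y w)
    (hAB : Integrable (fun w => A w * B w) σ) :
    ∃ (a : X → Lp 𝕜 2 σ) (b : Y → Lp 𝕜 2 σ),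
      Continuous a ∧ Continuous b ∧ (∃ C, ∀ x, ‖a x‖ ≤ C) ∧ (∃ C, ∀ y, ‖b y‖ ≤ C) ∧
      ∀ x y, inner 𝕜 (a x) (b y) = ∫ w, α x w * G y w ∂σ := by
  set δ : Ω → ℝ := fun w => √(B w / A w)
  have hδm : Measurable δ := (hBm.div hAm).sqrt
  obtain ⟨a, ha_cont, ha_bdd, ha⟩ := exists_continuous_bounded_toLp_of_dominated
    (F := fun x w => conj (α x w) * (δ w : 𝕜)) (p := 2) ofNat_ne_top
    (fun x => (RCLike.continuous_conj.measurable.comp (hαm x)).mul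
      (RCLike.measurable_ofReal.comp hδm) |>.aestronglyMeasurable) hAB.memLp_two_sqrt
    (fun x => ae_of_all _ fun w => by
      simpa [δ, abs_of_nonneg (Real.sqrt_nonneg _)] using
        Real.mul_sqrt_div_le_sqrt_mul (norm_nonneg _) (hαA x w) (B w))
    (ae_of_all _ fun w => (RCLike.continuous_conj.comp (hαc w)).mul continuous_const)
  obtain ⟨b, hb_cont, hb_bdd, hb⟩ := exists_continuous_bounded_toLp_of_dominated
    (F := fun y w => G y w * ((δ w)⁻¹ : ℝ)) (p := 2) ofNat_ne_top
    (fun y => (hGm y).mul (RCLike.measurable_ofReal.comp hδm.inv) |>.aestronglyMeasurable)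
    hAB.memLp_two_sqrt
    (fun y => ae_of_all _ fun w => by
      simpa [δ, abs_of_nonneg (Real.sqrt_nonneg _)] using
        Real.mul_inv_sqrt_div_le_sqrt_mul (norm_nonneg _) (hGB y w) (A w))
    (ae_of_all _ fun w => (hGc w).mul continuous_const)
  refine ⟨a, b, ha_cont, hb_cont, ha_bdd, hb_bdd, fun x y => ?_⟩
  rw [L2.inner_def]
  refine integral_congr_ae ?_
  filter_upwards [ha x, hb y] with w hax hby
  rw [hax, hby]
  exact inner_conj_mul_sqrt_div_mul_inv (hαA x w) (hGB y w)

end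

theorem norm_le_ciSup_norm {X Ω E : Type*} [Norm E] {F : X → Ω → E}
    (hF : ∃ C, ∀ x w, ‖F x w‖ ≤ C) (x : X) (w : Ω) : ‖F x w‖ ≤ ⨆ x, ‖F x w‖ :=
  le_ciSup (hF.imp fun _ hC => Set.forall_mem_range.2 fun x => hC x w) x

theorem besov_type_factorization_general
    {Ω : Type*} [MeasurableSpace Ω] (σ : Measure Ω)
    (f : ℝ → ℂ)
    (α β γ : ℝ → Ω → ℂ)
    (hαm : Measurable fun p : ℝ × Ω => α p.1 p.2)
    (hβm : Measurable fun p : ℝ × Ω => β p.1 p.2)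
    (hγm : Measurable fun p : ℝ × Ω => γ p.1 p.2)
    (hαb : ∃ C, ∀ s w, ‖α s w‖ ≤ C) (hβb : ∃ C, ∀ s w, ‖β s w‖ ≤ C)
    (hγb : ∃ C, ∀ s w, ‖γ s w‖ ≤ C)
    (hαc : ∀ w, Continuous fun s => α s w)
    (hβc : ∀ w, Continuous fun s => β s w)
    (hγc : ∀ w, Continuous fun s => γ s w)
    (hint : Integrable
      (fun w => (⨆ s, ‖α s w‖) * (⨆ s, ‖β s w‖) * (⨆ s, ‖γ s w‖)) σ)
    (hrep : ∀ s t u : ℝ,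
      dd f 2 (fun j => if j = 0 then s else if j = 1 then t else u) =
        ∫ w, α s w * β t w * γ u w ∂σ) :
    ∃ (a : ℝ → Lp ℂ 2 σ) (b : ℝ × ℝ → Lp ℂ 2 σ),
      Continuous a ∧ Continuous b ∧
      (∃ C, ∀ s, ‖a s‖ ≤ C) ∧ (∃ C, ∀ p, ‖b p‖ ≤ C) ∧
      ∀ s t u : ℝ,
        (inner ℂ (a s) (b (t, u)) : ℂ) =
          dd f 2 (fun j => if j = 0 then s else if j = 1 then t else u) := by
  have slice {F : ℝ → Ω → ℂ} (hF : Measurable fun p : ℝ × Ω => F p.1 p.2) (s : ℝ) :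
      Measurable (F s) :=
    hF.comp measurable_prodMk_left
  have sup_meas {F : ℝ → Ω → ℂ} (hF : Measurable fun p : ℝ × Ω => F p.1 p.2)
      (hFc : ∀ w, Continuous fun s => F s w) : Measurable fun w => ⨆ s, ‖F s w‖ :=
    measurable_ciSup_of_continuous (fun s => (slice hF s).norm) fun w => (hFc w).norm
  have hβγ (p : ℝ × ℝ) (w : Ω) : ‖β p.1 w * γ p.2 w‖ ≤ (⨆ s, ‖β s w‖) * ⨆ s, ‖γ s w‖ :=
    (norm_mul _ _).trans_le <| mul_le_mul (norm_le_ciSup_norm hβb _ _)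
      (norm_le_ciSup_norm hγb _ _) (norm_nonneg _)
      ((norm_nonneg _).trans (norm_le_ciSup_norm hβb 0 w))
  obtain ⟨a, b, ha, hb, ha_bdd, hb_bdd, hab⟩ := exists_L2_factorization_of_dominated
    (G := fun p : ℝ × ℝ => fun w => β p.1 w * γ p.2 w) (slice hαm)
    (fun p => (slice hβm p.1).mul (slice hγm p.2)) (sup_meas hαm hαc)
    ((sup_meas hβm hβc).mul (sup_meas hγm hγc)) (norm_le_ciSup_norm hαb) hβγ hαc
    (fun w => ((hβc w).comp continuous_fst).mul ((hγc w).comp continuous_snd))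
    (by simpa only [Pi.mul_apply, mul_assoc] using hint)
  refine ⟨a, b, ha, hb, ha_bdd, hb_bdd, fun s t u => ?_⟩
  simp only [hab, hrep, mul_assoc]

/-- Let `f ∈ C²(ℝ)` admit the representation
`f^[2](s,t,u) = ∫_Ω α(s,w) β(t,w) γ(u,w) dσ(w)` with `α, β, γ` bounded
measurable on `ℝ × Ω`, continuous in the first variable, and
`∫_Ω ‖α(·,w)‖_∞ ‖β(·,w)‖_∞ ‖γ(·,w)‖_∞ dσ(w) < ∞`, where `L²(Ω,σ)` is separable.
Then there exist bounded continuous functions `a : ℝ → L²(Ω,σ)` and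
`b : ℝ² → L²(Ω,σ)` with `f^[2](s,t,u) = ⟨a(s), b(t,u)⟩` for all `(s,t,u) ∈ ℝ³`. -/
theorem besov_type_factorization
    {Ω : Type*} [MeasurableSpace Ω] (σ : Measure Ω)
    [TopologicalSpace.SeparableSpace (Lp ℂ 2 σ)]
    (f : ℝ → ℂ) (hf : ContDiff ℝ 2 f)
    (α β γ : ℝ → Ω → ℂ)
    (hαm : Measurable fun p : ℝ × Ω => α p.1 p.2)
    (hβm : Measurable fun p : ℝ × Ω => β p.1 p.2)
    (hγm : Measurable fun p : ℝ × Ω => γ p.1 p.2)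
    (hαb : ∃ C, ∀ s w, ‖α s w‖ ≤ C) (hβb : ∃ C, ∀ s w, ‖β s w‖ ≤ C)
    (hγb : ∃ C, ∀ s w, ‖γ s w‖ ≤ C)
    (hαc : ∀ w, Continuous fun s => α s w)
    (hβc : ∀ w, Continuous fun s => β s w)
    (hγc : ∀ w, Continuous fun s => γ s w)
    (hint : Integrable
      (fun w => (⨆ s, ‖α s w‖) * (⨆ s, ‖β s w‖) * (⨆ s, ‖γ s w‖)) σ)
    (hrep : ∀ s t u : ℝ,
      dd f 2 (fun j => if j = 0 then s else if j = 1 then t else u) =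
        ∫ w, α s w * β t w * γ u w ∂σ) :
    ∃ (a : ℝ → Lp ℂ 2 σ) (b : ℝ × ℝ → Lp ℂ 2 σ),
      Continuous a ∧ Continuous b ∧
      (∃ C, ∀ s, ‖a s‖ ≤ C) ∧ (∃ C, ∀ p, ‖b p‖ ≤ C) ∧
      ∀ s t u : ℝ,
        (inner ℂ (a s) (b (t, u)) : ℂ) =
          dd f 2 (fun j => if j = 0 then s else if j = 1 then t else u) :=
  besov_type_factorization_general σ f α β γ hαm hβm hγm hαb hβb hγb hαc hβc hγc hint hrep
end

section
/- The span of the functions {f_m'' and conj(f_m)'' : m ≥ 1}, where f_m(x) = (x-i)^{-m}, equals the span of {(x-i)^{-k}, (x+i)^{-k} : k ≥ 3}, and this span is dense in C₀(ℝ) with respect to the uniform norm. -/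
/-!
The map `x ↦ (x - i)⁻¹` identifies `ℝ ∪ {∞}` with the circle `|z - i/2| = 1/2`, the point at
infinity going to `0`, so `C₀(ℝ)` becomes the space of continuous functions on that circle
vanishing at `0`. By Stone–Weierstrass, polynomials in `z` and `z̄` without constant term are
dense there. Pulled back to `ℝ`, `z̄ = (x + i)⁻¹`, and the relation `z z̄ = (z - z̄) / (2i)` turns
these polynomials into combinations of `(x ∓ i)⁻ᵏ` with `k ≥ 1`. The powers `k = 1, 2` are uniform
limits of the higher ones: `zᵏ (1 - (1 + iz)ⁿ)²` is a polynomial divisible by `z³`, and since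
`|1 + iz|² = 1 - |z|²` on the circle it is within `3 / √(n + 1)` of `zᵏ`. Finally
`f_m'' = m (m + 1) (x - i)⁻⁽ᵐ⁺²⁾`, so both spans coincide.
-/

open Complex Filter

/-- `f_m(x) = 1/(x-i)^m`. -/
noncomputable def fmi (m : ℕ) (x : ℝ) : ℂ := 1 / ((x : ℂ) - Complex.I) ^ m

/-- The set `{f_m'', conj(f_m)'' : m ≥ 1}`. -/
noncomputable def S1 : Set (ℝ → ℂ) :=
  {g | ∃ m : ℕ, 1 ≤ m ∧
    (g = deriv (deriv (fmi m)) ∨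
      g = deriv (deriv (fun x => starRingEnd ℂ (fmi m x))))}

/-- The set `{x ↦ (x-i)^{-k}, x ↦ (x+i)^{-k} : k ≥ 3}`. -/
noncomputable def S2 : Set (ℝ → ℂ) :=
  {g | ∃ k : ℕ, 3 ≤ k ∧
    (g = (fun x : ℝ => 1 / ((x : ℂ) - Complex.I) ^ k) ∨
      g = (fun x : ℝ => 1 / ((x : ℂ) + Complex.I) ^ k))}


open Set Submodule Polynomial Filter Topology

namespace Submodule

variable {𝕜 X E : Type*} [NormedField 𝕜] [SeminormedAddCommGroup E] [NormedSpace 𝕜 E]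

def uniformClosure (V : Submodule 𝕜 (X → E)) : Submodule 𝕜 (X → E) where
  carrier := {f | ∀ ε > 0, ∃ g ∈ V, ∀ x, ‖f x - g x‖ < ε}
  zero_mem' ε hε := ⟨0, V.zero_mem, fun x => by simpa using hε⟩
  add_mem' {f₁ f₂} hf₁ hf₂ ε hε := by
    obtain ⟨g₁, hg₁, h₁⟩ := hf₁ (ε / 2) (half_pos hε)
    obtain ⟨g₂, hg₂, h₂⟩ := hf₂ (ε / 2) (half_pos hε)
    refine ⟨g₁ + g₂, V.add_mem hg₁ hg₂, fun x => ?_⟩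
    calc ‖(f₁ + f₂) x - (g₁ + g₂) x‖ = ‖(f₁ x - g₁ x) + (f₂ x - g₂ x)‖ := by
          simp only [Pi.add_apply]; abel_nf
      _ ≤ ‖f₁ x - g₁ x‖ + ‖f₂ x - g₂ x‖ := norm_add_le _ _
      _ < ε / 2 + ε / 2 := add_lt_add (h₁ x) (h₂ x)
      _ = ε := add_halves ε
  smul_mem' c f hf ε hε := by
    obtain ⟨g, hg, h⟩ := hf (ε / (‖c‖ + 1)) (by positivity)
    refine ⟨c • g, V.smul_mem c hg, fun x => ?_⟩
    calc ‖(c • f) x - (c • g) x‖ = ‖c‖ * ‖f x - g x‖ := by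
          rw [Pi.smul_apply, Pi.smul_apply, ← smul_sub, norm_smul]
      _ ≤ ‖c‖ * (ε / (‖c‖ + 1)) := by gcongr; exact (h x).le
      _ < (‖c‖ + 1) * (ε / (‖c‖ + 1)) := by gcongr; linarith
      _ = ε := mul_div_cancel₀ ε (by positivity)

theorem uniformClosure_le_uniformClosure {V W : Submodule 𝕜 (X → E)}
    (h : V ≤ W.uniformClosure) : V.uniformClosure ≤ W.uniformClosure := by
  intro f hf ε hε
  obtain ⟨g, hg, hfg⟩ := hf (ε / 2) (half_pos hε)
  obtain ⟨k, hk, hgk⟩ := h hg (ε / 2) (half_pos hε)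
  refine ⟨k, hk, fun x => ?_⟩
  calc ‖f x - k x‖ ≤ ‖f x - g x‖ + ‖g x - k x‖ := norm_sub_le_norm_sub_add_norm_sub _ _ _
    _ < ε / 2 + ε / 2 := add_lt_add (hfg x) (hgk x)
    _ = ε := add_halves ε

theorem star_mem_uniformClosure [StarAddMonoid E] [NormedStarGroup E] {V : Submodule 𝕜 (X → E)}
    (hV : ∀ g ∈ V, star g ∈ V) {f : X → E} (hf : f ∈ V.uniformClosure) :
    star f ∈ V.uniformClosure := by
  intro ε hε
  obtain ⟨g, hg, hfg⟩ := hf ε hε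
  exact ⟨star g, hV g hg, fun x => by simpa [← star_sub] using hfg x⟩

end Submodule

section PowSpan

variable (R : Type*) {A : Type*} [CommRing R] [CommRing A] [Algebra R A]

def powSpan (a b : A) (m : ℕ) : Submodule R A :=
  span R (range (fun k : ℕ => a ^ (k + m)) ∪ range (fun k : ℕ => b ^ (k + m)))

variable {R} {a b : A} {m : ℕ}

lemma pow_add_mem_powSpan_left (k : ℕ) : a ^ (k + m) ∈ powSpan R a b m :=
  subset_span (.inl ⟨k, rfl⟩)

lemma pow_add_mem_powSpan_right (k : ℕ) : b ^ (k + m) ∈ powSpan R a b m :=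
  subset_span (.inr ⟨k, rfl⟩)

lemma powSpan_comm (a b : A) (m : ℕ) : powSpan R b a m = powSpan R a b m := by
  rw [powSpan, powSpan, union_comm]

lemma left_mul_mem_powSpan {c : R} (hab : a * b = c • (a - b)) {x : A}
    (hx : x ∈ powSpan R a b 1) : a * x ∈ powSpan R a b 1 := by
  have hab_pow : ∀ k : ℕ, a * b ^ (k + 1) ∈ powSpan R a b 1 := by
    intro k
    induction k with
    | zero =>
      rw [zero_add, pow_one, hab]
      refine smul_mem _ _ (sub_mem ?_ ?_)
      · exact subset_span (.inl ⟨0, pow_one a⟩)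
      · exact subset_span (.inr ⟨0, pow_one b⟩)
    | succ k ih =>
      rw [pow_succ' b (k + 1), ← mul_assoc, hab, smul_mul_assoc, sub_mul, ← pow_succ']
      exact smul_mem _ _ (sub_mem ih (pow_add_mem_powSpan_right _))
  induction hx using span_induction with
  | mem x hx =>
    obtain ⟨k, rfl⟩ | ⟨k, rfl⟩ := hx
    · rw [← pow_succ']; exact pow_add_mem_powSpan_left _
    · exact hab_pow k
  | zero => rw [mul_zero]; exact zero_mem _
  | add x y _ _ hx hy => rw [mul_add]; exact add_mem hx hy
  | smul r x _ hx => rw [mul_smul_comm]; exact smul_mem _ _ hx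

lemma mul_mem_powSpan {c : R} (hab : a * b = c • (a - b)) {x y : A}
    (hx : x ∈ powSpan R a b 1) (hy : y ∈ powSpan R a b 1) : x * y ∈ powSpan R a b 1 := by
  have hba : b * a = (-c) • (b - a) := by rw [mul_comm, hab, neg_smul, ← smul_neg, neg_sub]
  have hb : ∀ z ∈ powSpan R a b 1, b * z ∈ powSpan R a b 1 := by
    intro z hz
    rw [← powSpan_comm] at hz ⊢
    exact left_mul_mem_powSpan hba hz
  have hpow : ∀ d : A, (∀ z ∈ powSpan R a b 1, d * z ∈ powSpan R a b 1) →
      ∀ k : ℕ, d ^ (k + 1) * y ∈ powSpan R a b 1 := by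
    intro d hd k
    induction k with
    | zero => rw [zero_add, pow_one]; exact hd y hy
    | succ k ih => rw [pow_succ', mul_assoc]; exact hd _ ih
  induction hx using span_induction with
  | mem x hx =>
    obtain ⟨k, rfl⟩ | ⟨k, rfl⟩ := hx
    · exact hpow a (fun z => left_mul_mem_powSpan hab) k
    · exact hpow b hb k
  | zero => rw [zero_mul]; exact zero_mem _
  | add x z _ _ hx hz => rw [add_mul]; exact add_mem hx hz
  | smul r x _ hx => rw [smul_mul_assoc]; exact smul_mem _ _ hx

lemma star_mem_powSpan [StarRing R] [StarRing A] [StarModule R A] (hstar : star a = b) {x : A}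
    (hx : x ∈ powSpan R a b m) : star x ∈ powSpan R a b m := by
  induction hx using span_induction with
  | mem x hx =>
    obtain ⟨k, rfl⟩ | ⟨k, rfl⟩ := hx
    · rw [star_pow, hstar]; exact pow_add_mem_powSpan_right k
    · rw [star_pow, ← hstar, star_star]; exact pow_add_mem_powSpan_left k
  | zero => rw [star_zero]; exact zero_mem _
  | add x y _ _ hx hy => rw [star_add]; exact add_mem hx hy
  | smul r x _ hx => rw [star_smul]; exact smul_mem _ _ hx

end PowSpan

lemma aeval_mem_span_pow_of_X_pow_dvd {R A : Type*} [CommSemiring R] [Semiring A] [Algebra R A]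
    {m : ℕ} {p : R[X]} (h : X ^ m ∣ p) (a : A) :
    aeval a p ∈ span R (range fun k : ℕ => a ^ (k + m)) := by
  obtain ⟨q, rfl⟩ := h
  rw [map_mul, map_pow, aeval_X, aeval_eq_sum_range, Finset.mul_sum]
  refine sum_mem fun i _ => ?_
  rw [mul_smul_comm, ← pow_add, add_comm]
  exact smul_mem _ _ (subset_span ⟨i, rfl⟩)

lemma mul_one_sub_pow_le {t : ℝ} (h₀ : 0 ≤ t) (h₁ : t ≤ 1) (n : ℕ) :
    t * (1 - t) ^ n ≤ 1 / (n + 1) := by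
  have hbernoulli : 1 + n * t ≤ (1 + t) ^ n := one_add_mul_le_pow (by linarith) n
  have hprod : (1 + t) ^ n * (1 - t) ^ n ≤ 1 := by
    rw [← mul_pow]; exact pow_le_one₀ (by nlinarith) (by nlinarith)
  have hpos : 0 ≤ (1 - t) ^ n := pow_nonneg (by linarith) n
  rw [le_div_iff₀ (by positivity)]
  calc t * (1 - t) ^ n * (n + 1) ≤ (1 + n * t) * (1 - t) ^ n := by nlinarith
    _ ≤ (1 + t) ^ n * (1 - t) ^ n := by gcongr
    _ ≤ 1 := hprod

lemma hasDerivAt_ofReal_sub_zpow {c : ℂ} (hc : c.im ≠ 0) (n : ℤ) (x : ℝ) :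
    HasDerivAt (fun y : ℝ => ((y : ℂ) - c) ^ n) (n * ((x : ℂ) - c) ^ (n - 1)) x := by
  have hx : (x : ℂ) - c ≠ 0 := fun h => hc (by simpa using congrArg Complex.im h.symm)
  simpa using
    ((hasDerivAt_zpow n _ (.inl hx)).comp (x : ℂ) ((hasDerivAt_id _).sub_const c)).comp_ofReal

lemma deriv_deriv_one_div_ofReal_sub_pow {c : ℂ} (hc : c.im ≠ 0) (m : ℕ) :
    deriv (deriv fun x : ℝ => 1 / ((x : ℂ) - c) ^ m) =
      ((m * (m + 1) : ℕ) : ℂ) • fun x : ℝ => 1 / ((x : ℂ) - c) ^ (m + 2) := by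
  have h₁ : deriv (fun x : ℝ => 1 / ((x : ℂ) - c) ^ m) =
      fun x : ℝ => (-m : ℤ) * ((x : ℂ) - c) ^ (-m - 1 : ℤ) := by
    simp only [one_div, ← zpow_natCast, ← zpow_neg]
    exact funext fun x => (hasDerivAt_ofReal_sub_zpow hc _ x).deriv
  rw [h₁]
  funext x
  rw [((hasDerivAt_ofReal_sub_zpow hc _ x).const_mul _).deriv]
  simp only [Pi.smul_apply, smul_eq_mul, one_div, ← zpow_natCast, ← zpow_neg]
  push_cast
  ring_nf

lemma deriv_deriv_fmi (m : ℕ) :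
    deriv (deriv (fmi m)) = ((m * (m + 1) : ℕ) : ℂ) • fun x : ℝ => 1 / ((x : ℂ) - I) ^ (m + 2) :=
  deriv_deriv_one_div_ofReal_sub_pow (by simp) m

lemma deriv_deriv_conj_fmi (m : ℕ) :
    deriv (deriv fun x => starRingEnd ℂ (fmi m x)) =
      ((m * (m + 1) : ℕ) : ℂ) • fun x : ℝ => 1 / ((x : ℂ) + I) ^ (m + 2) := by
  have h := deriv_deriv_one_div_ofReal_sub_pow (c := -I) (by simp) m
  simp only [sub_neg_eq_add] at h
  rw [← h]
  congr 2
  funext x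
  simp [fmi]

theorem span_S1_eq_span_S2 : span ℂ S1 = span ℂ S2 := by
  apply le_antisymm <;> rw [span_le]
  · rintro g ⟨m, hm, rfl | rfl⟩
    · rw [deriv_deriv_fmi]
      exact smul_mem _ _ (subset_span ⟨m + 2, by omega, .inl rfl⟩)
    · rw [deriv_deriv_conj_fmi]
      exact smul_mem _ _ (subset_span ⟨m + 2, by omega, .inr rfl⟩)
  · rintro g ⟨k, hk, rfl | rfl⟩ <;> obtain ⟨m, rfl⟩ : ∃ m, k = m + 2 := ⟨k - 2, by omega⟩ <;>
      have hm : ((m * (m + 1) : ℕ) : ℂ) ≠ 0 := by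
        norm_cast; exact Nat.mul_ne_zero (by omega) (by omega)
    · rw [SetLike.mem_coe, ← smul_mem_iff _ hm, ← deriv_deriv_fmi]
      exact subset_span ⟨m, by omega, .inl rfl⟩
    · rw [SetLike.mem_coe, ← smul_mem_iff _ hm, ← deriv_deriv_conj_fmi]
      exact subset_span ⟨m, by omega, .inr rfl⟩

/-- The circle `|z - i/2| = 1/2`, image of `ℝ ∪ {∞}` under `x ↦ (x - i)⁻¹`. -/
def invCircle : Set ℂ := {z | normSq z = z.im}

lemma norm_le_one_of_mem_invCircle {z : ℂ} (hz : z ∈ invCircle) : ‖z‖ ≤ 1 := by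
  have h : ‖z‖ ^ 2 ≤ ‖z‖ := by
    rw [Complex.sq_norm, hz]; exact (le_abs_self _).trans (abs_im_le_norm z)
  nlinarith [norm_nonneg z]

lemma norm_one_add_I_mul_sq {z : ℂ} (hz : z ∈ invCircle) : ‖1 + I * z‖ ^ 2 = 1 - ‖z‖ ^ 2 := by
  have hz' : z.re * z.re + z.im * z.im = z.im := hz
  rw [Complex.sq_norm, Complex.sq_norm, normSq_apply, normSq_apply]
  simp only [add_re, add_im, one_re, one_im, mul_re, mul_im, I_re, I_im]
  nlinarith

lemma norm_pow_sub_pow_mul_sq_le {z : ℂ} (hz : z ∈ invCircle) {k : ℕ} (hk : 1 ≤ k) (n : ℕ) :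
    ‖z ^ k - z ^ k * (1 - (1 + I * z) ^ n) ^ 2‖ ^ 2 ≤ 9 / (n + 1) := by
  set u := 1 + I * z
  have hz₁ := norm_le_one_of_mem_invCircle hz
  have hu : ‖u‖ ^ 2 = 1 - ‖z‖ ^ 2 := norm_one_add_I_mul_sq hz
  have hu₁ : ‖u‖ ≤ 1 := by nlinarith [norm_nonneg u, norm_nonneg z]
  have hun : ‖u ^ n‖ ≤ 1 := by rw [norm_pow]; exact pow_le_one₀ (norm_nonneg u) hu₁
  have hdiff : z ^ k - z ^ k * (1 - u ^ n) ^ 2 = z ^ k * u ^ n * (2 - u ^ n) := by ring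
  have hbound : ‖z ^ k - z ^ k * (1 - u ^ n) ^ 2‖ ≤ 3 * (‖z‖ * ‖u‖ ^ n) := by
    rw [hdiff, norm_mul, norm_mul, norm_pow, norm_pow]
    have h2 : ‖(2 : ℂ) - u ^ n‖ ≤ 3 := by
      calc ‖(2 : ℂ) - u ^ n‖ ≤ ‖(2 : ℂ)‖ + ‖u ^ n‖ := norm_sub_le _ _
        _ ≤ 3 := by rw [Complex.norm_ofNat]; linarith
    have hzk : ‖z‖ ^ k ≤ ‖z‖ := pow_le_of_le_one (norm_nonneg z) hz₁ (by omega)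
    calc ‖z‖ ^ k * ‖u‖ ^ n * ‖(2 : ℂ) - u ^ n‖ ≤ ‖z‖ * ‖u‖ ^ n * 3 := by gcongr
      _ = 3 * (‖z‖ * ‖u‖ ^ n) := by ring
  have hsq : (‖z‖ * ‖u‖ ^ n) ^ 2 ≤ 1 / (n + 1) := by
    rw [mul_pow, ← pow_mul, mul_comm n, pow_mul, hu]
    exact mul_one_sub_pow_le (sq_nonneg _) (by nlinarith) n
  calc ‖z ^ k - z ^ k * (1 - u ^ n) ^ 2‖ ^ 2 ≤ (3 * (‖z‖ * ‖u‖ ^ n)) ^ 2 := by gcongr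
    _ = 9 * (‖z‖ * ‖u‖ ^ n) ^ 2 := by ring
    _ ≤ 9 * (1 / (n + 1)) := by gcongr
    _ = 9 / (n + 1) := by ring

noncomputable def invSubI (x : ℝ) : ℂ := ((x : ℂ) - I)⁻¹

lemma invSubI_mem_invCircle (x : ℝ) : invSubI x ∈ invCircle := by
  simp [invSubI, invCircle]

lemma invSubI_pow (k : ℕ) : invSubI ^ k = fun x : ℝ => 1 / ((x : ℂ) - I) ^ k := by
  funext x; simp [invSubI]

lemma star_invSubI_pow (k : ℕ) : star invSubI ^ k = fun x : ℝ => 1 / ((x : ℂ) + I) ^ k := by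
  funext x; simp [invSubI, sub_eq_add_neg]

lemma invSubI_mul_star : invSubI * star invSubI = (2 * I)⁻¹ • (invSubI - star invSubI) := by
  funext x
  have h₁ : (x : ℂ) - I ≠ 0 := fun h => by simpa using congrArg Complex.im h
  have h₂ : (x : ℂ) + I ≠ 0 := fun h => by simpa using congrArg Complex.im h
  simp only [Pi.mul_apply, Pi.smul_apply, Pi.sub_apply, Pi.star_apply, invSubI, smul_eq_mul,
    star_inv₀, star_sub, Complex.star_def, conj_ofReal, conj_I, sub_neg_eq_add]
  field_simp
  ring

lemma span_S2_eq_powSpan : span ℂ S2 = powSpan ℂ invSubI (star invSubI) 3 := by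
  congr 1
  ext g
  simp only [S2, invSubI_pow, star_invSubI_pow, mem_ofPred_eq, mem_union, mem_range]
  constructor
  · rintro ⟨k, hk, rfl | rfl⟩ <;> obtain ⟨j, rfl⟩ : ∃ j, k = j + 3 := ⟨k - 3, by omega⟩
    exacts [.inl ⟨j, rfl⟩, .inr ⟨j, rfl⟩]
  · rintro (⟨j, rfl⟩ | ⟨j, rfl⟩)
    exacts [⟨j + 3, by omega, .inl rfl⟩, ⟨j + 3, by omega, .inr rfl⟩]

lemma invSubI_pow_mem_uniformClosure {k : ℕ} (hk : 1 ≤ k) :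
    invSubI ^ k ∈ (powSpan ℂ invSubI (star invSubI) 3).uniformClosure := by
  intro ε hε
  obtain ⟨n, hn⟩ := exists_nat_gt (9 / ε ^ 2)
  set p : ℂ[X] := X ^ k * (1 - (1 + C I * X) ^ n) ^ 2
  have hdvd : X ^ 3 ∣ p := by
    have hX : X ∣ 1 - (1 + C I * X) ^ n := by
      rw [X_dvd_iff, coeff_zero_eq_eval_zero]; simp
    rw [pow_succ']
    exact mul_dvd_mul (dvd_pow_self X (by omega)) (pow_dvd_pow_of_dvd hX 2)
  refine ⟨aeval invSubI p,
    span_mono subset_union_left (aeval_mem_span_pow_of_X_pow_dvd hdvd _), fun x => ?_⟩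
  have hsq := norm_pow_sub_pow_mul_sq_le (invSubI_mem_invCircle x) hk n
  have hn' : 9 / ((n : ℝ) + 1) < ε ^ 2 := by
    rw [div_lt_iff₀ (by positivity)]
    rw [div_lt_iff₀ (by positivity)] at hn
    nlinarith
  refine lt_of_pow_lt_pow_left₀ 2 hε.le (lt_of_le_of_lt ?_ hn')
  simpa [p, aeval_fn_apply] using hsq

lemma powSpan_one_le_uniformClosure :
    powSpan ℂ invSubI (star invSubI) 1 ≤ (powSpan ℂ invSubI (star invSubI) 3).uniformClosure := by
  rw [powSpan, span_le]
  rintro _ (⟨k, rfl⟩ | ⟨k, rfl⟩)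
  · exact invSubI_pow_mem_uniformClosure (by omega)
  · show star invSubI ^ (k + 1) ∈ _
    rw [← star_pow]
    exact star_mem_uniformClosure (fun g => star_mem_powSpan rfl)
      (invSubI_pow_mem_uniformClosure (by omega))

noncomputable def rationalStarSubalgebra : NonUnitalStarSubalgebra ℂ (ℝ → ℂ) :=
  { powSpan ℂ invSubI (star invSubI) 1 with
    mul_mem' := mul_mem_powSpan invSubI_mul_star
    star_mem' := star_mem_powSpan rfl }

instance : Fact ((0 : ℂ) ∈ invCircle) := ⟨by simp [invCircle]⟩

instance : CompactSpace invCircle := by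
  rw [← isCompact_iff_compactSpace]
  refine (isCompact_closedBall (0 : ℂ) 1).of_isClosed_subset
    (isClosed_eq Complex.continuous_normSq Complex.continuous_im) fun z hz => ?_
  simpa using norm_le_one_of_mem_invCircle hz

noncomputable def toInvCircle (x : ℝ) : invCircle := ⟨invSubI x, invSubI_mem_invCircle x⟩

open scoped ContinuousMapZero

noncomputable def compToInvCircle : C(invCircle, ℂ)₀ →⋆ₙₐ[ℂ] (ℝ → ℂ) where
  toFun F := F ∘ toInvCircle
  map_smul' _ _ := rfl
  map_zero' := rfl
  map_add' _ _ := rfl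
  map_mul' _ _ := rfl
  map_star' _ := rfl

lemma compToInvCircle_mem_rationalStarSubalgebra {F : C(invCircle, ℂ)₀}
    (hF : F ∈ NonUnitalStarAlgebra.adjoin ℂ {ContinuousMapZero.id invCircle}) :
    compToInvCircle F ∈ rationalStarSubalgebra := by
  refine NonUnitalStarAlgebra.adjoin_le (S := rationalStarSubalgebra.comap compToInvCircle)
    ?_ hF
  rw [singleton_subset_iff]
  exact subset_span (.inl ⟨0, pow_one invSubI⟩)

/-- On `invCircle \ {0}` one has `z⁻¹ = x - i`, so this is `g` transported to the circle. -/
noncomputable def circleExtend (g : ℝ → ℂ) (z : ℂ) : ℂ := if z = 0 then 0 else g z⁻¹.re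

lemma inv_im_of_mem_invCircle {z : ℂ} (hz : z ∈ invCircle) (h0 : z ≠ 0) : z⁻¹.im = -1 := by
  have hz' : normSq z = z.im := hz
  rw [inv_im, ← hz', neg_div, div_self (normSq_pos.2 h0).ne']

lemma tendsto_inv_re_cocompact :
    Tendsto (fun z : ℂ => z⁻¹.re) (𝓝[invCircle \ {0}] 0) (cocompact ℝ) := by
  rw [← Metric.cobounded_eq_cocompact, ← tendsto_norm_atTop_iff_cobounded]
  have hinv : Tendsto (fun z : ℂ => ‖z⁻¹‖ - 1) (𝓝[invCircle \ {0}] 0) atTop :=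
    tendsto_atTop_add_const_right _ _
      (tendsto_norm_inv_nhdsNE_zero_atTop.mono_left (nhdsWithin_mono _ (sdiff_subset_compl _ _)))
  refine tendsto_atTop_mono' _ ?_ hinv
  filter_upwards [self_mem_nhdsWithin] with z ⟨hz, h0⟩
  have h := norm_le_abs_re_add_abs_im z⁻¹
  rw [inv_im_of_mem_invCircle hz h0, abs_neg, abs_one] at h
  rw [Real.norm_eq_abs]
  linarith

lemma continuousOn_circleExtend {g : ℝ → ℂ} (hg : Continuous g)
    (hg0 : Tendsto g (cocompact ℝ) (𝓝 0)) : ContinuousOn (circleExtend g) invCircle := by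
  intro z _
  by_cases h0 : z = 0
  · subst h0
    rw [← continuousWithinAt_sdiff_self, ContinuousWithinAt, circleExtend, if_pos rfl]
    refine (hg0.comp tendsto_inv_re_cocompact).congr' ?_
    filter_upwards [self_mem_nhdsWithin] with w ⟨_, hw⟩
    exact (if_neg hw).symm
  · have hcont : ContinuousAt (fun w : ℂ => g w⁻¹.re) z :=
      hg.continuousAt.comp (continuous_re.continuousAt.comp (continuousAt_inv₀ h0))
    refine (hcont.congr ?_).continuousWithinAt
    filter_upwards [isOpen_compl_singleton.mem_nhds h0] with w hw
    exact (if_neg hw).symm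

noncomputable def toCircleFun (g : ℝ → ℂ) (hg : Continuous g)
    (hg0 : Tendsto g (cocompact ℝ) (𝓝 0)) : C(invCircle, ℂ)₀ :=
  ⟨⟨invCircle.domRestrict (circleExtend g), (continuousOn_circleExtend hg hg0).domRestrict⟩,
    if_pos rfl⟩

lemma toCircleFun_toInvCircle {g : ℝ → ℂ} (hg : Continuous g)
    (hg0 : Tendsto g (cocompact ℝ) (𝓝 0)) (x : ℝ) : toCircleFun g hg hg0 (toInvCircle x) = g x := by
  have h0 : invSubI x ≠ 0 := inv_ne_zero fun h => by simpa using congrArg Complex.im h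
  show circleExtend g (invSubI x) = g x
  rw [circleExtend, if_neg h0, invSubI, inv_inv, sub_re, ofReal_re, I_re, sub_zero]

theorem mem_uniformClosure_powSpan {g : ℝ → ℂ} (hg : Continuous g)
    (hg0 : Tendsto g (cocompact ℝ) (𝓝 0)) :
    g ∈ (powSpan ℂ invSubI (star invSubI) 1).uniformClosure := by
  intro ε hε
  set G := toCircleFun g hg hg0
  obtain ⟨F, hF, hGF⟩ := (ContinuousMapZero.adjoin_id_dense invCircle).exists_dist_lt G hε
  refine ⟨compToInvCircle F, compToInvCircle_mem_rationalStarSubalgebra hF, fun x => ?_⟩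
  rw [← toCircleFun_toInvCircle hg hg0 x]
  calc ‖G (toInvCircle x) - F (toInvCircle x)‖ ≤ ‖G - F‖ :=
        ContinuousMap.norm_coe_le_norm ((G - F : C(invCircle, ℂ)₀) : C(invCircle, ℂ)) _
    _ < ε := by rwa [← dist_eq_norm]

/-- The span of `{f_m'', conj(f_m)'' : m ≥ 1}` (with `f_m(x) = (x-i)^{-m}`)
equals the span of `{(x-i)^{-k}, (x+i)^{-k} : k ≥ 3}`, and this span is
uniformly dense in `C₀(ℝ)`. -/
theorem span_secondDerivatives_dense :
    Submodule.span ℂ S1 = Submodule.span ℂ S2 ∧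
    ∀ g : ℝ → ℂ, Continuous g → Tendsto g (cocompact ℝ) (nhds 0) →
      ∀ ε : ℝ, 0 < ε →
        ∃ h ∈ Submodule.span ℂ S1, ∀ x : ℝ, ‖g x - h x‖ < ε := by
  refine ⟨span_S1_eq_span_S2, fun g hg hg0 ε hε => ?_⟩
  have hle := uniformClosure_le_uniformClosure powSpan_one_le_uniformClosure
  rw [span_S1_eq_span_S2, span_S2_eq_powSpan]
  exact hle (mem_uniformClosure_powSpan hg hg0) ε hε
end
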